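/- arXiv:1307.3822 — 2 statements merged into one kernel-verified Lean document; each statement's English description precedes it below -/
import Mathlib

section
/- Let T be a tree of minimum total edge weight among all trees in a metric graph G that span R and have every vertex of R internal. Then there exists such an optimal tree T* in which every leaf of T* is adjacent to a vertex of R. -/
open SimpleGraph
open scoped Classical

variable {V : Type*}

noncomputable def subDegree [Fintype V] {G : SimpleGraph V} (H : G.Subgraph) (v : V) : ℕ :=
  (Finset.univ.filter fun u => H.Adj v u).card

noncomputable def subWeight [Fintype V] {G : SimpleGraph V} (w : V → V → ℝ) (H : G.Subgraph) : ℝ :=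
  (∑ u, ∑ v, if H.Adj u v then w u v else 0) / 2

def IsTreeSub {G : SimpleGraph V} (H : G.Subgraph) : Prop := H.coe.IsTree

def IsMetric (w : V → V → ℝ) : Prop :=
  (∀ a b, 0 ≤ w a b) ∧ (∀ a b, w a b = w b a) ∧ (∀ a b c, w a c ≤ w a b + w b c)

def IsInternalSteiner [Fintype V] {G : SimpleGraph V} (R : Set V) (H : G.Subgraph) : Prop :=
  IsTreeSub H ∧ R ⊆ H.verts ∧ ∀ v ∈ R, 2 ≤ subDegree H v


/-! Deleting a leaf with no neighbour in `R` keeps an internal Steiner tree internal (the degrees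
of the vertices of `R` do not change) and, the weights being nonnegative, does not increase its
weight. Hence an optimal internal Steiner tree with the fewest vertices has no such leaf. -/

section Pruning

variable [Fintype V] {G : SimpleGraph V}

lemma subDegree_eq_one_iff (H : G.Subgraph) (v : V) :
    subDegree H v = 1 ↔ ∃! u, H.Adj v u := by
  simp only [subDegree, Finset.card_eq_one, Finset.eq_singleton_iff_unique_mem,
    Finset.mem_filter, Finset.mem_univ, true_and]
  rfl

lemma subDegree_deleteVerts {H : G.Subgraph} {s : Set V} {x : V} (hx : x ∉ s)
    (hs : ∀ y ∈ s, ¬H.Adj x y) : subDegree (H.deleteVerts s) x = subDegree H x := by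
  unfold subDegree
  congr 1
  ext y
  simp only [Finset.mem_filter, Finset.mem_univ, true_and, Subgraph.deleteVerts_adj]
  exact ⟨fun h => h.2.2.2.2, fun h => ⟨h.fst_mem, hx, h.snd_mem, fun hy => hs y hy h, h⟩⟩

lemma subWeight_mono {w : V → V → ℝ} (hw : ∀ a b, 0 ≤ w a b) {H H' : G.Subgraph}
    (h : H' ≤ H) : subWeight w H' ≤ subWeight w H := by
  unfold subWeight
  gcongr with a _ b _
  split_ifs with h' hH
  exacts [le_rfl, absurd (h.2 h') hH, hw a b, le_rfl]

lemma IsTreeSub.deleteVerts_singleton {H : G.Subgraph} {v : V} (hH : IsTreeSub H)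
    (hv : subDegree H v = 1) : IsTreeSub (H.deleteVerts {v}) := by
  obtain ⟨u, hvu, hu⟩ := (subDegree_eq_one_iff H v).1 hv
  let s : Set H.verts := {x | (x : V) ≠ v}
  have hpre : (H.coe.induce s).Preconnected :=
    hH.connected.preconnected.induce_of_degree_eq_one fun x hx y hy z hz => by
      have hxv : (x : V) = v := not_not.1 hx
      exact Subtype.ext ((hu _ (hxv ▸ hy)).trans (hu _ (hxv ▸ hz)).symm)
  let f : H.coe.induce s →g (H.deleteVerts {v}).coe :=
    { toFun := fun x => ⟨x.1.1, x.1.2, x.2⟩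
      map_rel' := fun {x y} h => Subgraph.deleteVerts_adj.2 ⟨x.1.2, x.2, y.1.2, y.2, h⟩ }
  have hf : Function.Surjective f := fun x => ⟨⟨⟨x.1, x.2.1⟩, x.2.2⟩, rfl⟩
  have : Nonempty (H.deleteVerts {v}).verts := ⟨⟨u, hvu.snd_mem, hvu.ne.symm⟩⟩
  exact ⟨Connected.mk (hpre.map f hf),
    hH.isAcyclic.comap (Subgraph.inclusion Subgraph.deleteVerts_le)
      (Subgraph.inclusion.injective Subgraph.deleteVerts_le)⟩

variable {R : Set V} {T : G.Subgraph} {v : V}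

lemma IsInternalSteiner.deleteVerts_leaf (hT : IsInternalSteiner R T)
    (hv : subDegree T v = 1) (hvR : ∀ r ∈ R, ¬T.Adj v r) :
    IsInternalSteiner R (T.deleteVerts {v}) := by
  have hRv : ∀ r ∈ R, r ∉ ({v} : Set V) := by
    rintro r hr rfl
    have := hT.2.2 r hr
    omega
  refine ⟨hT.1.deleteVerts_singleton hv, fun r hr => ⟨hT.2.1 hr, hRv r hr⟩, fun r hr => ?_⟩
  rw [subDegree_deleteVerts (hRv r hr) fun y hy hry => hvR r hr (hy ▸ hry.symm)]
  exact hT.2.2 r hr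

def IsOptimalInternalSteiner (w : V → V → ℝ) (R : Set V) (T : G.Subgraph) : Prop :=
  IsInternalSteiner R T ∧
    ∀ T' : G.Subgraph, IsInternalSteiner R T' → subWeight w T ≤ subWeight w T'

lemma IsOptimalInternalSteiner.deleteVerts_leaf {w : V → V → ℝ} (hw : ∀ a b, 0 ≤ w a b)
    (hT : IsOptimalInternalSteiner w R T) (hv : subDegree T v = 1)
    (hvR : ∀ r ∈ R, ¬T.Adj v r) : IsOptimalInternalSteiner w R (T.deleteVerts {v}) :=
  ⟨hT.1.deleteVerts_leaf hv hvR, fun T' hT' =>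
    (subWeight_mono hw Subgraph.deleteVerts_le).trans (hT.2 T' hT')⟩

theorem IsOptimalInternalSteiner.exists_leaves_adj {w : V → V → ℝ} (hw : ∀ a b, 0 ≤ w a b)
    (hT : IsOptimalInternalSteiner w R T) :
    ∃ T' : G.Subgraph, IsOptimalInternalSteiner w R T' ∧
      ∀ v ∈ T'.verts, subDegree T' v = 1 → ∃ r ∈ R, T'.Adj v r := by
  let S := {T' : G.Subgraph | IsOptimalInternalSteiner w R T'}
  let Tmin := Function.argminOn (fun T' : G.Subgraph => T'.verts.ncard) S ⟨T, hT⟩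
  have hmin : IsOptimalInternalSteiner w R Tmin := Function.argminOn_mem _ S _
  refine ⟨Tmin, hmin, fun v hv hdeg => ?_⟩
  by_contra! hvR
  exact Function.not_lt_argminOn (fun T' : G.Subgraph => T'.verts.ncard) S
    (hmin.deleteVerts_leaf hw hdeg hvR) (Set.ncard_sdiff_singleton_lt_of_mem hv (Set.toFinite _))

end Pruning

theorem stmt2_general {V : Type*} [Fintype V] (w : V → V → ℝ) (hm : IsMetric w)
    (R : Set V)
    (T : (⊤ : SimpleGraph V).Subgraph) (hT : IsInternalSteiner R T)
    (hopt : ∀ T' : (⊤ : SimpleGraph V).Subgraph,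
      IsInternalSteiner R T' → subWeight w T ≤ subWeight w T') :
    ∃ Tstar : (⊤ : SimpleGraph V).Subgraph, IsInternalSteiner R Tstar ∧
      (∀ T' : (⊤ : SimpleGraph V).Subgraph,
        IsInternalSteiner R T' → subWeight w Tstar ≤ subWeight w T') ∧
      ∀ v ∈ Tstar.verts, subDegree Tstar v = 1 → ∃ r ∈ R, Tstar.Adj v r := by
  obtain ⟨Tstar, ⟨hTstar, hoptstar⟩, hleaves⟩ :=
    IsOptimalInternalSteiner.exists_leaves_adj hm.1 ⟨hT, hopt⟩
  exact ⟨Tstar, hTstar, hoptstar, hleaves⟩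

/-- There exists an optimal internal Steiner tree in which every leaf is
adjacent to a vertex of R. -/
theorem stmt2 {V : Type*} [Fintype V] (w : V → V → ℝ) (hm : IsMetric w)
    (R : Set V) (hR : 2 ≤ (Rᶜ : Set V).ncard)
    (T : (⊤ : SimpleGraph V).Subgraph) (hT : IsInternalSteiner R T)
    (hopt : ∀ T' : (⊤ : SimpleGraph V).Subgraph,
      IsInternalSteiner R T' → subWeight w T ≤ subWeight w T') :
    ∃ Tstar : (⊤ : SimpleGraph V).Subgraph, IsInternalSteiner R Tstar ∧
      (∀ T' : (⊤ : SimpleGraph V).Subgraph,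
        IsInternalSteiner R T' → subWeight w Tstar ≤ subWeight w T') ∧
      ∀ v ∈ Tstar.verts, subDegree Tstar v = 1 → ∃ r ∈ R, Tstar.Adj v r :=
  stmt2_general w hm R T hT hopt
end

section
/- Let G be a metric graph, R ⊆ V(G), and s,t ∈ V \ R. Let T₁ be a tree spanning R in G[V \ {s,t}] with w(T₁) ≤ ρ·w(SMT(G[V\{s,t}], R)). Let u₁, u₂ ∈ V(T₁) be vertices closest to s and t respectively, and T₂ = T₁ ∪ {(s,u₁),(t,u₂)}. If T* is an optimal internal Steiner tree for (G,R) having s and t as leaves, then w(T₂) ≤ ρ·w(T*), where ρ ≥ 1. -/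
/-!
The weight is subadditive under union, so `w(T₂) ≤ w(T₁) + w(s, u₁) + w(t, u₂)`. Deleting the
leaves `s` and `t` from `T*` leaves a tree `T⁻` that spans `R` and avoids `s` and `t`, so
`w(T₁) ≤ ρ·w(T⁻)`, while `w(T*) = w(T⁻) + w(s, pₛ) + w(t, pₜ)`. The neighbours `pₛ, pₜ` lie in
`R ⊆ V(T₁)`, hence `w(s, u₁) ≤ w(s, pₛ)` and `w(t, u₂) ≤ w(t, pₜ)`, and `ρ ≥ 1` absorbs them.
-/
open SimpleGraph
open scoped Classical

variable {V : Type*}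

namespace SimpleGraph.Subgraph

variable {G : SimpleGraph V} {H : G.Subgraph} {s p : V}

theorem isTree_coe_deleteVerts_of_leaf (hH : H.coe.IsTree) (hsp : H.Adj s p)
    (hleaf : ∀ y, H.Adj s y → y = p) : (H.deleteVerts {s}).coe.IsTree := by
  rw [(H.coeDeleteVertsIso {s}).isTree_iff]
  refine ⟨(connected_iff _).2 ⟨hH.connected.preconnected.induce_of_degree_eq_one ?_,
    ⟨⟨⟨p, hsp.snd_mem⟩, by simpa using hsp.ne.symm⟩⟩⟩, hH.isAcyclic.induce _⟩
  rintro ⟨v, hv⟩ hvs a ha b hb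
  obtain rfl : v = s := by simpa using hvs
  exact Subtype.ext ((hleaf _ ha).trans (hleaf _ hb).symm)

theorem eq_deleteVerts_sup_subgraphOfAdj_of_leaf (hsp : H.Adj s p)
    (hleaf : ∀ y, H.Adj s y → y = p) :
    H = H.deleteVerts {s} ⊔ G.subgraphOfAdj (H.adj_sub hsp) := by
  ext u v
  · simp only [verts_sup, deleteVerts_verts, subgraphOfAdj_verts, Set.mem_union,
      Set.mem_sdiff, Set.mem_singleton_iff, Set.mem_insert_iff]
    grind [hsp.fst_mem, hsp.snd_mem]
  · simp only [sup_adj, deleteVerts_adj, subgraphOfAdj_adj, Sym2.eq_iff, Set.mem_singleton_iff]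
    grind [adj_symm, Adj.fst_mem, Adj.snd_mem]

end SimpleGraph.Subgraph

section Weight

variable [Fintype V] {G : SimpleGraph V} {H : G.Subgraph} {w : V → V → ℝ}

theorem eq_of_adj_of_subDegree_eq_one {s p y : V} (hs : subDegree H s = 1) (hsp : H.Adj s p)
    (hsy : H.Adj s y) : y = p :=
  Finset.card_le_one.mp hs.le _ (by simpa using hsy) _ (by simpa using hsp)

theorem subWeight_sup_le (hw : ∀ a b, 0 ≤ w a b) (A B : G.Subgraph) :
    subWeight w (A ⊔ B) ≤ subWeight w A + subWeight w B := by
  simp only [subWeight, ← add_div, ← Finset.sum_add_distrib]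
  gcongr with u _ v _
  simp only [Subgraph.sup_adj]
  split_ifs <;> simp_all

theorem subWeight_sup_of_disjoint {A B : G.Subgraph} (h : ∀ u v, A.Adj u v → ¬B.Adj u v) :
    subWeight w (A ⊔ B) = subWeight w A + subWeight w B := by
  simp only [subWeight, ← add_div, ← Finset.sum_add_distrib]
  congr 1
  refine Finset.sum_congr rfl fun u _ => Finset.sum_congr rfl fun v _ => ?_
  by_cases hA : A.Adj u v <;> simp [hA, h u v]

theorem subWeight_subgraphOfAdj (hw : ∀ a b, w a b = w b a) {a b : V} (hab : G.Adj a b) :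
    subWeight w (G.subgraphOfAdj hab) = w a b := by
  have hsplit : ∀ u v, (if (G.subgraphOfAdj hab).Adj u v then w u v else 0) =
      (if u = a ∧ v = b then w a b else 0) + (if u = b ∧ v = a then w a b else 0) := by
    intro u v
    by_cases h₁ : u = a ∧ v = b
    · obtain ⟨rfl, rfl⟩ := h₁
      simp [hab.ne]
    by_cases h₂ : u = b ∧ v = a
    · obtain ⟨rfl, rfl⟩ := h₂
      simp [hab.ne', Sym2.eq_swap, hw u v]
    rw [if_neg h₁, if_neg h₂, if_neg (by grind [subgraphOfAdj_adj, Sym2.eq_iff])]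
    norm_num
  simp only [subWeight, hsplit, Finset.sum_add_distrib, ite_and]
  simp

theorem subWeight_eq_deleteVerts_add_of_leaf (hw : ∀ a b, w a b = w b a) {s p : V}
    (hsp : H.Adj s p) (hleaf : ∀ y, H.Adj s y → y = p) :
    subWeight w H = subWeight w (H.deleteVerts {s}) + w s p := by
  conv_lhs => rw [H.eq_deleteVerts_sup_subgraphOfAdj_of_leaf hsp hleaf]
  rw [subWeight_sup_of_disjoint, subWeight_subgraphOfAdj hw]
  intro u v huv
  simp only [Subgraph.deleteVerts_adj, Set.mem_singleton_iff] at huv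
  simp only [subgraphOfAdj_adj, Sym2.eq_iff]
  grind

end Weight

theorem stmt8_general {V : Type*} [Fintype V] (w : V → V → ℝ) (hm : IsMetric w)
    (R : Set V) (s t : V) (hst : s ≠ t) (hsR : s ∉ R) (htR : t ∉ R)
    (ρ : ℝ) (hρ : 1 ≤ ρ)
    (T₁ : (⊤ : SimpleGraph V).Subgraph)
    (hT₁span : R ⊆ T₁.verts)
    (hT₁apx : ∀ T' : (⊤ : SimpleGraph V).Subgraph, IsTreeSub T' → R ⊆ T'.verts →
      s ∉ T'.verts → t ∉ T'.verts → subWeight w T₁ ≤ ρ * subWeight w T')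
    (u₁ u₂ : V)
    (hu₁min : ∀ x ∈ T₁.verts, w s u₁ ≤ w s x)
    (hu₂min : ∀ x ∈ T₁.verts, w t u₂ ≤ w t x)
    (hadj₁ : (⊤ : SimpleGraph V).Adj s u₁) (hadj₂ : (⊤ : SimpleGraph V).Adj t u₂)
    (Tstar : (⊤ : SimpleGraph V).Subgraph) (hTstar : IsInternalSteiner R Tstar)
    (hsleaf : subDegree Tstar s = 1)
    (htleaf : subDegree Tstar t = 1)
    (ps pt : V) (hps : Tstar.Adj s ps) (hpsR : ps ∈ R)
    (hpt : Tstar.Adj t pt) (hptR : pt ∈ R) :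
    subWeight w (T₁ ⊔ SimpleGraph.subgraphOfAdj ⊤ hadj₁ ⊔ SimpleGraph.subgraphOfAdj ⊤ hadj₂)
      ≤ ρ * subWeight w Tstar := by
  obtain ⟨hw0, hwsymm, -⟩ := hm
  have hs_leaf : ∀ y, Tstar.Adj s y → y = ps :=
    fun _ => eq_of_adj_of_subDegree_eq_one hsleaf hps
  set Ts := Tstar.deleteVerts {s}
  have hpt_s : Ts.Adj t pt := Subgraph.deleteVerts_adj.2
    ⟨hpt.fst_mem, hst.symm, hpt.snd_mem, fun h => hsR (h ▸ hptR), hpt⟩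
  have ht_leaf : ∀ y, Ts.Adj t y → y = pt :=
    fun _ hy => eq_of_adj_of_subDegree_eq_one htleaf hpt (Subgraph.deleteVerts_le.2 hy)
  set Tst := Ts.deleteVerts {t}
  have happrox : subWeight w T₁ ≤ ρ * subWeight w Tst :=
    hT₁apx Tst (Subgraph.isTree_coe_deleteVerts_of_leaf
      (Subgraph.isTree_coe_deleteVerts_of_leaf hTstar.1 hps hs_leaf) hpt_s ht_leaf)
      (fun r hr => ⟨⟨hTstar.2.1 hr, fun h => hsR (h ▸ hr)⟩, fun h => htR (h ▸ hr)⟩)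
      (fun h => h.1.2 rfl) (fun h => h.2 rfl)
  have hTstar_eq : subWeight w Tstar = subWeight w Tst + w s ps + w t pt := by
    rw [subWeight_eq_deleteVerts_add_of_leaf hwsymm hps hs_leaf,
      subWeight_eq_deleteVerts_add_of_leaf hwsymm hpt_s ht_leaf]
    ring
  calc subWeight w (T₁ ⊔ SimpleGraph.subgraphOfAdj ⊤ hadj₁ ⊔ SimpleGraph.subgraphOfAdj ⊤ hadj₂)
      ≤ subWeight w T₁ + w s u₁ + w t u₂ := by
        grw [subWeight_sup_le hw0, subWeight_sup_le hw0, subWeight_subgraphOfAdj hwsymm,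
          subWeight_subgraphOfAdj hwsymm]
    _ ≤ ρ * subWeight w Tst + w s ps + w t pt := by
        gcongr
        exacts [hu₁min ps (hT₁span hpsR), hu₂min pt (hT₁span hptR)]
    _ ≤ ρ * subWeight w Tstar := by
        rw [hTstar_eq]
        nlinarith [hw0 s ps, hw0 t pt]

/-- Attaching s and t to a ρ-approximate Steiner tree T₁ of G[V\{s,t}] via
their closest vertices gives a tree T₂ with w(T₂) ≤ ρ·w(T*), where T* is an
optimal internal Steiner tree having s, t as leaves (with pendant edges of
minimum weight to R). -/
theorem stmt8 {V : Type*} [Fintype V] (w : V → V → ℝ) (hm : IsMetric w)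
    (R : Set V) (s t : V) (hst : s ≠ t) (hsR : s ∉ R) (htR : t ∉ R)
    (ρ : ℝ) (hρ : 1 ≤ ρ)
    (T₁ : (⊤ : SimpleGraph V).Subgraph) (hT₁tree : IsTreeSub T₁)
    (hT₁span : R ⊆ T₁.verts) (hT₁s : s ∉ T₁.verts) (hT₁t : t ∉ T₁.verts)
    (hT₁apx : ∀ T' : (⊤ : SimpleGraph V).Subgraph, IsTreeSub T' → R ⊆ T'.verts →
      s ∉ T'.verts → t ∉ T'.verts → subWeight w T₁ ≤ ρ * subWeight w T')
    (u₁ u₂ : V) (hu₁ : u₁ ∈ T₁.verts) (hu₂ : u₂ ∈ T₁.verts)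
    (hu₁min : ∀ x ∈ T₁.verts, w s u₁ ≤ w s x)
    (hu₂min : ∀ x ∈ T₁.verts, w t u₂ ≤ w t x)
    (hadj₁ : (⊤ : SimpleGraph V).Adj s u₁) (hadj₂ : (⊤ : SimpleGraph V).Adj t u₂)
    (Tstar : (⊤ : SimpleGraph V).Subgraph) (hTstar : IsInternalSteiner R Tstar)
    (hopt : ∀ T' : (⊤ : SimpleGraph V).Subgraph,
      IsInternalSteiner R T' → subWeight w Tstar ≤ subWeight w T')
    (hs : s ∈ Tstar.verts) (hsleaf : subDegree Tstar s = 1)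
    (ht : t ∈ Tstar.verts) (htleaf : subDegree Tstar t = 1)
    (ps pt : V) (hps : Tstar.Adj s ps) (hpsR : ps ∈ R)
    (hpsmin : ∀ r ∈ R, w s ps ≤ w s r)
    (hpt : Tstar.Adj t pt) (hptR : pt ∈ R)
    (hptmin : ∀ r ∈ R, w t pt ≤ w t r) :
    subWeight w (T₁ ⊔ SimpleGraph.subgraphOfAdj ⊤ hadj₁ ⊔ SimpleGraph.subgraphOfAdj ⊤ hadj₂)
      ≤ ρ * subWeight w Tstar :=
  stmt8_general w hm R s t hst hsR htR ρ hρ T₁ hT₁span hT₁apx u₁ u₂ hu₁min hu₂min hadj₁ hadj₂ Tstar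
    hTstar hsleaf htleaf ps pt hps hpsR hpt hptR
end
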